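/- arXiv:1312.1878 — 4 statements merged into one kernel-verified Lean document; each statement's English description precedes it below -/
import Mathlib

section
/- Let {·_λ·} be a λ-bracket of rank d on 𝒜 (ℝ-bilinear, sesquilinear, satisfying the left and right Leibniz rules). Then {·_λ·} is skewsymmetric on every pair (f,g) ∈ 𝒜 × 𝒜 if and only if it is skewsymmetric on every pair of generators (u^i, u^j), 1 ≤ i, j ≤ n. -/
open MvPolynomial

/-- Multi-indices `I ∈ ℤ_{≥0}^d`. -/
abbrev MIdx (d : ℕ) := Fin d →₀ ℕ

/-- The algebra of differential polynomials: the commutative polynomial `ℝ`-algebra on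
indeterminates `u^i_I`, `i ∈ {1,…,n}`, `I ∈ ℤ_{≥0}^d`. -/
abbrev DP (n d : ℕ) := MvPolynomial (Fin n × MIdx d) ℝ

/-- The `α`-th standard basis multi-index `E_α`. -/
noncomputable def Eidx {d : ℕ} (α : Fin d) : MIdx d := Finsupp.single α 1

/-- The total derivative `∂_α`: the unique derivation of `DP n d` with
`∂_α (u^i_I) = u^i_{I+E_α}`. -/
noncomputable def tder (n d : ℕ) (α : Fin d) (f : DP n d) : DP n d :=
  ∑ v ∈ f.vars, X (v.1, v.2 + Eidx α) * pderiv v f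

section LambdaGeneric

variable {A : Type*} [CommRing A]

/-- Coefficientwise application of an operator `T : A → A` to a polynomial in `λ₁,…,λ_d`. -/
noncomputable def cderG (d : ℕ) (T : A → A) (P : MvPolynomial (Fin d) A) :
    MvPolynomial (Fin d) A :=
  ∑ m ∈ P.support, monomial m (T (coeff m P))

/-- The operator `λ_α + ∂_α` on `A[λ₁,…,λ_d]` (multiplication by `λ_α` plus
coefficientwise `∂_α = T α`). -/
noncomputable def lopG (d : ℕ) (T : Fin d → A → A) (α : Fin d)
    (P : MvPolynomial (Fin d) A) : MvPolynomial (Fin d) A :=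
  X α * P + cderG d (T α) P

/-- The operator `−λ_α − ∂_α` on `A[λ₁,…,λ_d]`. -/
noncomputable def nlopG (d : ℕ) (T : Fin d → A → A) (α : Fin d)
    (P : MvPolynomial (Fin d) A) : MvPolynomial (Fin d) A :=
  -(X α * P) - cderG d (T α) P

/-- `Π_α (λ_α + ∂_α)^{N_α}`. -/
noncomputable def lopPowG (d : ℕ) (T : Fin d → A → A) (N : Fin d →₀ ℕ)
    (P : MvPolynomial (Fin d) A) : MvPolynomial (Fin d) A :=
  (List.finRange d).foldl (fun Q α => (lopG d T α)^[N α] Q) P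

/-- `Π_α (−λ_α − ∂_α)^{N_α}`. -/
noncomputable def nlopPowG (d : ℕ) (T : Fin d → A → A) (N : Fin d →₀ ℕ)
    (P : MvPolynomial (Fin d) A) : MvPolynomial (Fin d) A :=
  (List.finRange d).foldl (fun Q α => (nlopG d T α)^[N α] Q) P

/-- For `Q = Σ_N C_N λ^N`, the operator `a ↦ Σ_N C_N · Π_α(λ_α+∂_α)^{N_α}(a)`,
i.e. the action of `Q` with `λ` replaced by `λ + ∂`. -/
noncomputable def hatActG (d : ℕ) (T : Fin d → A → A) (Q P : MvPolynomial (Fin d) A) :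
    MvPolynomial (Fin d) A :=
  ∑ m ∈ Q.support, C (coeff m Q) * lopPowG d T m P

/-- For `P = Σ_N C_N λ^N`, the element `Σ_N Π_α(−λ_α−∂_α)^{N_α}(C_N)`. -/
noncomputable def skewAdjG (d : ℕ) (T : Fin d → A → A) (P : MvPolynomial (Fin d) A) :
    MvPolynomial (Fin d) A :=
  ∑ m ∈ P.support, nlopPowG d T m (C (coeff m P))

/-- Sesquilinearity of a `λ`-bracket with respect to the derivations `T α`. -/
def SesqG (d : ℕ) (T : Fin d → A → A) (B : A → A → MvPolynomial (Fin d) A) : Prop :=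
  ∀ (α : Fin d) (f g : A),
    B (T α f) g = -(X α * B f g) ∧ B f (T α g) = lopG d T α (B f g)

/-- The right Leibniz rule `{f_λ gh} = {f_λ g}h + {f_λ h}g`. -/
def RLeibG (d : ℕ) (B : A → A → MvPolynomial (Fin d) A) : Prop :=
  ∀ f g h : A, B f (g * h) = B f g * C h + B f h * C g

/-- The left Leibniz rule `{fg_λ h} = {f_{λ+∂} h}·g + {g_{λ+∂} h}·f`. -/
def LLeibG (d : ℕ) (T : Fin d → A → A) (B : A → A → MvPolynomial (Fin d) A) : Prop :=
  ∀ f g h : A, B (f * g) h = hatActG d T (B f h) (C g) + hatActG d T (B g h) (C f)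

/-- Skewsymmetry on the pair `(f,g)`: `{g_λ f} = −Σ_N Π_α(−λ_α−∂_α)^{N_α}(C_N)`
where `{f_λ g} = Σ_N C_N λ^N`. -/
def SkewOnG (d : ℕ) (T : Fin d → A → A) (B : A → A → MvPolynomial (Fin d) A)
    (f g : A) : Prop :=
  B g f = -skewAdjG d T (B f g)

/-- `A[λ][μ]`: polynomials in `μ₁,…,μ_d` with coefficients polynomials in `λ₁,…,λ_d`. -/
abbrev MP2 (d : ℕ) (A : Type*) [CommRing A] :=
  MvPolynomial (Fin d) (MvPolynomial (Fin d) A)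

/-- Embed a polynomial in `μ` with coefficients in `A` into `A[λ][μ]`. -/
noncomputable def toOuterG (d : ℕ) (Q : MvPolynomial (Fin d) A) : MP2 d A :=
  ∑ m ∈ Q.support, monomial m (C (coeff m Q))

/-- `λ_α + μ_α` as an element of `A[λ][μ]`. -/
noncomputable def lamMuG (d : ℕ) (α : Fin d) : MP2 d A := C (X α) + X α

/-- `Π_α (λ_α + μ_α)^{M_α}` in `A[λ][μ]`. -/
noncomputable def lmPowG (d : ℕ) (M : Fin d →₀ ℕ) : MP2 d A :=
  M.prod fun α k => (lamMuG d α) ^ k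

/-- `{f_λ {g_μ h}}` as an element of `A[λ][μ]`, the outer bracket `B1` applied
coefficientwise to the polynomial `{g_μ h}` in `μ`. -/
noncomputable def jac1G (d : ℕ) (B1 B2 : A → A → MvPolynomial (Fin d) A)
    (f g h : A) : MP2 d A :=
  ∑ m ∈ (B2 g h).support, monomial m (B1 f (coeff m (B2 g h)))

/-- `{g_μ {f_λ h}}` as an element of `A[λ][μ]`, the outer bracket `B1` (in `μ`) applied
coefficientwise to the polynomial `{f_λ h}` in `λ`. -/
noncomputable def jac2G (d : ℕ) (B1 B2 : A → A → MvPolynomial (Fin d) A)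
    (f g h : A) : MP2 d A :=
  ∑ N ∈ (B2 f h).support,
    C (monomial N (1 : A)) * toOuterG d (B1 g (coeff N (B2 f h)))

/-- `{{f_λ g}_{λ+μ} h}`: with `{f_λ g}_{B1} = Σ_N C_N λ^N` and
`{C_N μ h}_{B2} = Σ_M D_{N,M} μ^M`, this is `Σ_N λ^N Σ_M D_{N,M}·Π_α(λ_α+μ_α)^{M_α}`. -/
noncomputable def jac3G (d : ℕ) (B1 B2 : A → A → MvPolynomial (Fin d) A)
    (f g h : A) : MP2 d A :=
  ∑ N ∈ (B1 f g).support,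
    C (monomial N (1 : A)) *
      ∑ M ∈ (B2 (coeff N (B1 f g)) h).support,
        C (C (coeff M (B2 (coeff N (B1 f g)) h))) * lmPowG d M

/-- The PVA–Jacobi identity on the triple `(f,g,h)`:
`{f_λ {g_μ h}} − {g_μ {f_λ h}} = {{f_λ g}_{λ+μ} h}` in `A[λ,μ]`. -/
def JacOnG (d : ℕ) (B : A → A → MvPolynomial (Fin d) A) (f g h : A) : Prop :=
  jac1G d B B f g h - jac2G d B B f g h = jac3G d B B f g h

end LambdaGeneric

section BilinGeneric

variable {A : Type*} [CommRing A] [Algebra ℝ A]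

/-- `ℝ`-bilinearity of a `λ`-bracket. -/
def BilinG (d : ℕ) (B : A → A → MvPolynomial (Fin d) A) : Prop :=
  (∀ f₁ f₂ g, B (f₁ + f₂) g = B f₁ g + B f₂ g) ∧
  (∀ (r : ℝ) (f g : A), B (r • f) g = r • B f g) ∧
  (∀ f g₁ g₂, B f (g₁ + g₂) = B f g₁ + B f g₂) ∧
  (∀ (r : ℝ) (f g : A), B f (r • g) = r • B f g)

end BilinGeneric

/-- The generator `u^i = u^i_0` of the algebra of differential polynomials. -/
noncomputable def genU (n d : ℕ) (i : Fin n) : DP n d := X (i, 0)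

/-!
Skewsymmetry on a pair `(f, g)` survives sums, the total derivatives `∂_α` and products in
either slot. Sesquilinearity and the two Leibniz rules express the brackets of `∂_α f`, `f g`,
… through operations on `A[λ]` (multiplication by `λ_α`, the operator `λ_α + ∂_α`, right
multiplication by a constant, `Q ↦ Q(λ + ∂)·g`), and the map
`Σ_N C_N λ^N ↦ Σ_N (−λ−∂)^N C_N` intertwines each of these with its counterpart. As `𝒜` is
generated as an algebra by the `u^i_I = ∂^I u^i`, skewsymmetry on the pairs of generators
spreads to all pairs.

That map is an involution, so only the relations for `λ_α + ∂_α` and for right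
multiplication by a constant need a computation on monomials; the other two follow by
conjugation.
-/

theorem Finsupp.induction_add_single_one {ι : Type*} {motive : (ι →₀ ℕ) → Prop}
    (N : ι →₀ ℕ) (zero : motive 0)
    (add_single : ∀ N a, motive N → motive (N + Finsupp.single a 1)) : motive N := by
  induction N using Finsupp.induction with
  | zero => exact zero
  | single_add a b N _ _ ih =>
    suffices ∀ k, motive (N + Finsupp.single a k) by simpa [add_comm] using this b
    intro k
    induction k with
    | zero => simpa using ih
    | succ k ihk => simpa [Finsupp.single_add, add_assoc] using add_single _ a ihk

namespace List

variable {ι M : Type*}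

theorem foldl_iterate_commute (F : ι → M → M) (e : ι → ℕ) {G : M → M}
    (hG : ∀ β, Function.Commute G (F β)) (L : List ι) (x : M) :
    L.foldl (fun Q β => (F β)^[e β] Q) (G x) = G (L.foldl (fun Q β => (F β)^[e β] Q) x) := by
  induction L generalizing x with
  | nil => rfl
  | cons β L ih => simp only [foldl_cons, ← ((hG β).iterate_right (e β)).eq, ih]

theorem foldl_iterate_add_single [DecidableEq ι] (F : ι → M → M)
    (hF : ∀ β γ, Function.Commute (F β) (F γ)) (N : ι →₀ ℕ) {α : ι} {L : List ι}
    (hL : L.Nodup) (hα : α ∈ L) (x : M) :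
    L.foldl (fun Q β => (F β)^[(N + Finsupp.single α 1 : ι →₀ ℕ) β] Q) x =
      F α (L.foldl (fun Q β => (F β)^[N β] Q) x) := by
  induction L generalizing x with
  | nil => simp at hα
  | cons β L ih =>
    obtain ⟨hβL, hL⟩ := nodup_cons.1 hL
    simp only [foldl_cons]
    by_cases hβα : β = α
    · subst hβα
      have hN : ∀ Q, ∀ γ ∈ L,
          (F γ)^[(N + Finsupp.single β 1 : ι →₀ ℕ) γ] Q = (F γ)^[N γ] Q := by
        intro Q γ hγ
        rw [Finsupp.add_apply, Finsupp.single_eq_of_ne (by rintro rfl; exact hβL hγ), add_zero]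
      rw [foldl_ext _ _ _ hN, Finsupp.add_apply, Finsupp.single_eq_same,
        Function.iterate_succ_apply', foldl_iterate_commute F _ (hF β)]
    · rw [Finsupp.add_apply, Finsupp.single_eq_of_ne hβα, add_zero]
      exact ih hL ((mem_cons.1 hα).resolve_left (Ne.symm hβα)) _

theorem foldl_iterate_map_add [AddCommMonoid M] (F : ι → M →+ M) (e : ι → ℕ) (L : List ι)
    (x y : M) :
    L.foldl (fun Q β => (F β)^[e β] Q) (x + y) =
      L.foldl (fun Q β => (F β)^[e β] Q) x + L.foldl (fun Q β => (F β)^[e β] Q) y := by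
  induction L generalizing x y with
  | nil => rfl
  | cons β L ih => simp only [foldl_cons, iterate_map_add, ih]

end List

section Operators

variable {A : Type*} [CommRing A] {d : ℕ}

theorem coeff_cderG (D : A →+ A) (P : MvPolynomial (Fin d) A) (m : Fin d →₀ ℕ) :
    coeff m (cderG d D P) = D (coeff m P) := by
  classical
  simp only [cderG, coeff_sum, coeff_monomial, Finset.sum_ite_eq', mem_support_iff]
  split_ifs with h
  · rfl
  · rw [not_not.1 h, map_zero]

theorem cderG_monomial (D : A →+ A) (N : Fin d →₀ ℕ) (a : A) :
    cderG d D (monomial N a) = monomial N (D a) := by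
  classical
  ext m
  simp only [coeff_cderG, coeff_monomial]
  split_ifs <;> simp

theorem cderG_C (D : A →+ A) (a : A) : cderG d D (C a) = C (D a) := by
  rw [C_apply, cderG_monomial, C_apply]

theorem cderG_add (D : A →+ A) (P Q : MvPolynomial (Fin d) A) :
    cderG d D (P + Q) = cderG d D P + cderG d D Q := by
  ext m
  simp only [coeff_cderG, coeff_add, map_add]

theorem cderG_X_mul (D : A →+ A) (α : Fin d) (P : MvPolynomial (Fin d) A) :
    cderG d D (X α * P) = X α * cderG d D P := by
  classical
  ext m
  simp only [coeff_cderG, coeff_X_mul']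
  split_ifs <;> simp

theorem cderG_C_mul (D : A →+ A) (hD : ∀ x y, D (x * y) = D x * y + x * D y) (a : A)
    (P : MvPolynomial (Fin d) A) :
    cderG d D (C a * P) = C (D a) * P + C a * cderG d D P := by
  ext m
  simp only [coeff_cderG, coeff_C_mul, coeff_add, hD]

theorem cderG_neg (D : A →+ A) (P : MvPolynomial (Fin d) A) :
    cderG d D (-P) = -cderG d D P :=
  map_neg (AddMonoidHom.mk' _ (cderG_add D)) P

theorem cderG_comm (D E : A →+ A) (h : Function.Commute D E) (P : MvPolynomial (Fin d) A) :
    cderG d D (cderG d E P) = cderG d E (cderG d D P) := by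
  ext m
  simp only [coeff_cderG, h.eq]

theorem nlopG_eq_neg_lopG (T : Fin d → A → A) (α : Fin d) (P : MvPolynomial (Fin d) A) :
    nlopG d T α P = -lopG d T α P := by
  rw [nlopG, lopG]
  ring

variable (T : Fin d → A →+ A)

theorem lopG_add (α : Fin d) (P Q : MvPolynomial (Fin d) A) :
    lopG d (T ·) α (P + Q) = lopG d (T ·) α P + lopG d (T ·) α Q := by
  simp only [lopG, cderG_add]
  ring

theorem lopG_neg (α : Fin d) (P : MvPolynomial (Fin d) A) :
    lopG d (T ·) α (-P) = -lopG d (T ·) α P :=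
  map_neg (AddMonoidHom.mk' _ (lopG_add T α)) P

theorem nlopG_add (α : Fin d) (P Q : MvPolynomial (Fin d) A) :
    nlopG d (T ·) α (P + Q) = nlopG d (T ·) α P + nlopG d (T ·) α Q := by
  simp only [nlopG_eq_neg_lopG, lopG_add]
  ring

theorem lopG_monomial (α : Fin d) (N : Fin d →₀ ℕ) (a : A) :
    lopG d (T ·) α (monomial N a) =
      monomial (N + Finsupp.single α 1) a + monomial N (T α a) := by
  rw [lopG, cderG_monomial, X, monomial_mul, one_mul, add_comm (Finsupp.single α 1)]

theorem lopG_C_mul (hT : ∀ α x y, T α (x * y) = T α x * y + x * T α y) (α : Fin d) (a : A)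
    (P : MvPolynomial (Fin d) A) :
    lopG d (T ·) α (C a * P) = C a * lopG d (T ·) α P + C (T α a) * P := by
  rw [lopG, lopG, cderG_C_mul _ (hT α)]
  ring

theorem cderG_commute_lopG (hcomm : ∀ α β, Function.Commute (T α) (T β)) (α β : Fin d) :
    Function.Commute (cderG d (T α)) (lopG d (T ·) β) := fun P => by
  simp only [lopG, cderG_add, cderG_X_mul, cderG_comm _ _ (hcomm α β)]

theorem lopG_commute (hcomm : ∀ α β, Function.Commute (T α) (T β)) (α β : Fin d) :
    Function.Commute (lopG d (T ·) α) (lopG d (T ·) β) := fun P => by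
  simp only [lopG, cderG_add, cderG_X_mul, cderG_comm _ _ (hcomm α β)]
  ring

theorem nlopG_commute (hcomm : ∀ α β, Function.Commute (T α) (T β)) (α β : Fin d) :
    Function.Commute (nlopG d (T ·) α) (nlopG d (T ·) β) := fun P => by
  simp only [nlopG_eq_neg_lopG, lopG_neg, neg_neg, (lopG_commute T hcomm α β).eq]

theorem lopPowG_zero (P : MvPolynomial (Fin d) A) : lopPowG d (T ·) 0 P = P := by
  simp [lopPowG]

theorem nlopPowG_zero (P : MvPolynomial (Fin d) A) : nlopPowG d (T ·) 0 P = P := by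
  simp [nlopPowG]

theorem lopPowG_add_single (hcomm : ∀ α β, Function.Commute (T α) (T β))
    (N : Fin d →₀ ℕ) (α : Fin d) (P : MvPolynomial (Fin d) A) :
    lopPowG d (T ·) (N + Finsupp.single α 1) P = lopG d (T ·) α (lopPowG d (T ·) N P) :=
  List.foldl_iterate_add_single _ (lopG_commute T hcomm) N (List.nodup_finRange d)
    (List.mem_finRange α) P

theorem nlopPowG_add_single (hcomm : ∀ α β, Function.Commute (T α) (T β))
    (N : Fin d →₀ ℕ) (α : Fin d) (P : MvPolynomial (Fin d) A) :
    nlopPowG d (T ·) (N + Finsupp.single α 1) P = nlopG d (T ·) α (nlopPowG d (T ·) N P) :=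
  List.foldl_iterate_add_single _ (nlopG_commute T hcomm) N (List.nodup_finRange d)
    (List.mem_finRange α) P

theorem nlopPowG_map_add (N : Fin d →₀ ℕ) (P Q : MvPolynomial (Fin d) A) :
    nlopPowG d (T ·) N (P + Q) = nlopPowG d (T ·) N P + nlopPowG d (T ·) N Q :=
  List.foldl_iterate_map_add (fun α => AddMonoidHom.mk' _ (nlopG_add T α)) _ _ P Q

theorem nlopPowG_map_zero (N : Fin d →₀ ℕ) : nlopPowG d (T ·) N 0 = 0 := by
  simpa using nlopPowG_map_add T N 0 0

theorem nlopPowG_commute {G : MvPolynomial (Fin d) A → MvPolynomial (Fin d) A}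
    (hG : ∀ α, Function.Commute G (nlopG d (T ·) α)) (N : Fin d →₀ ℕ)
    (P : MvPolynomial (Fin d) A) :
    nlopPowG d (T ·) N (G P) = G (nlopPowG d (T ·) N P) :=
  List.foldl_iterate_commute _ _ hG _ P

theorem skewAdjG_eq_sum (P : MvPolynomial (Fin d) A) :
    skewAdjG d (T ·) P =
      (AddMonoidAlgebra.coeff P).sum fun N a => nlopPowG d (T ·) N (C a) := by
  rw [skewAdjG, sum_def]

theorem skewAdjG_monomial (N : Fin d →₀ ℕ) (a : A) :
    skewAdjG d (T ·) (monomial N a) = nlopPowG d (T ·) N (C a) := by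
  rw [skewAdjG_eq_sum, sum_monomial_eq (by rw [map_zero, nlopPowG_map_zero])]

theorem skewAdjG_add (P Q : MvPolynomial (Fin d) A) :
    skewAdjG d (T ·) (P + Q) = skewAdjG d (T ·) P + skewAdjG d (T ·) Q := by
  simp only [skewAdjG_eq_sum, AddMonoidAlgebra.coeff_add]
  exact Finsupp.sum_add_index' (fun _ => by rw [map_zero, nlopPowG_map_zero])
    (fun _ _ _ => by rw [map_add, nlopPowG_map_add])

theorem skewAdjG_neg (P : MvPolynomial (Fin d) A) :
    skewAdjG d (T ·) (-P) = -skewAdjG d (T ·) P :=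
  map_neg (AddMonoidHom.mk' _ (skewAdjG_add T)) P

theorem hatActG_eq_sum (Q P : MvPolynomial (Fin d) A) :
    hatActG d (T ·) Q P =
      (AddMonoidAlgebra.coeff Q).sum fun N a => C a * lopPowG d (T ·) N P := by
  rw [hatActG, sum_def]

theorem hatActG_monomial (N : Fin d →₀ ℕ) (a : A) (P : MvPolynomial (Fin d) A) :
    hatActG d (T ·) (monomial N a) P = C a * lopPowG d (T ·) N P := by
  rw [hatActG_eq_sum, sum_monomial_eq (by rw [map_zero, zero_mul])]

theorem hatActG_add (Q₁ Q₂ P : MvPolynomial (Fin d) A) :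
    hatActG d (T ·) (Q₁ + Q₂) P = hatActG d (T ·) Q₁ P + hatActG d (T ·) Q₂ P := by
  simp only [hatActG_eq_sum, AddMonoidAlgebra.coeff_add]
  exact Finsupp.sum_add_index' (fun _ => by rw [map_zero, zero_mul])
    (fun _ _ _ => by rw [map_add, add_mul])

theorem hatActG_neg (Q P : MvPolynomial (Fin d) A) :
    hatActG d (T ·) (-Q) P = -hatActG d (T ·) Q P :=
  map_neg (AddMonoidHom.mk' (hatActG d (T ·) · P) (hatActG_add T · · P)) Q

theorem hatActG_C (a : A) (P : MvPolynomial (Fin d) A) : hatActG d (T ·) (C a) P = C a * P := by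
  nth_rewrite 1 [C_apply]
  rw [hatActG_monomial, lopPowG_zero]

variable (hcomm : ∀ α β, Function.Commute (T α) (T β))
include hcomm

theorem cderG_nlopPowG (α : Fin d) (N : Fin d →₀ ℕ) (P : MvPolynomial (Fin d) A) :
    cderG d (T α) (nlopPowG d (T ·) N P) = nlopPowG d (T ·) N (cderG d (T α) P) := by
  refine (nlopPowG_commute T (fun β Q => ?_) N P).symm
  rw [nlopG_eq_neg_lopG, nlopG_eq_neg_lopG, cderG_neg, (cderG_commute_lopG T hcomm α β).eq]

theorem skewAdjG_lopG (α : Fin d) (P : MvPolynomial (Fin d) A) :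
    skewAdjG d (T ·) (lopG d (T ·) α P) = -(X α * skewAdjG d (T ·) P) := by
  induction P using induction_on' with
  | monomial N a =>
    rw [lopG_monomial, skewAdjG_add, skewAdjG_monomial, skewAdjG_monomial, skewAdjG_monomial,
      nlopPowG_add_single T hcomm, nlopG, cderG_nlopPowG T hcomm, cderG_C]
    ring
  | add P Q hP hQ => rw [lopG_add, skewAdjG_add, skewAdjG_add, hP, hQ, mul_add, neg_add]

theorem skewAdjG_skewAdjG (P : MvPolynomial (Fin d) A) :
    skewAdjG d (T ·) (skewAdjG d (T ·) P) = P := by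
  induction P using induction_on' with
  | monomial N a =>
    rw [skewAdjG_monomial]
    induction N using Finsupp.induction_add_single_one with
    | zero => rw [nlopPowG_zero, C_apply, skewAdjG_monomial, nlopPowG_zero, C_apply]
    | add_single N α ih =>
      rw [nlopPowG_add_single T hcomm, nlopG_eq_neg_lopG, skewAdjG_neg, skewAdjG_lopG T hcomm,
        ih, neg_neg, X, monomial_mul, one_mul, add_comm (Finsupp.single α 1)]
  | add P Q hP hQ => rw [skewAdjG_add, skewAdjG_add, hP, hQ]

theorem skewAdjG_X_mul (α : Fin d) (P : MvPolynomial (Fin d) A) :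
    skewAdjG d (T ·) (X α * P) = -lopG d (T ·) α (skewAdjG d (T ·) P) := by
  conv_lhs => rw [← skewAdjG_skewAdjG T hcomm P]
  rw [← neg_neg (X α * _), ← skewAdjG_lopG T hcomm, skewAdjG_neg, skewAdjG_skewAdjG T hcomm]

variable (hT : ∀ α x y, T α (x * y) = T α x * y + x * T α y)
include hT

theorem lopG_hatActG (α : Fin d) (Q P : MvPolynomial (Fin d) A) :
    lopG d (T ·) α (hatActG d (T ·) Q P) = hatActG d (T ·) (lopG d (T ·) α Q) P := by
  induction Q using induction_on' with
  | monomial N a =>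
    rw [hatActG_monomial, lopG_C_mul T hT, lopG_monomial, hatActG_add, hatActG_monomial,
      hatActG_monomial, lopPowG_add_single T hcomm]
  | add Q₁ Q₂ h₁ h₂ => rw [hatActG_add, lopG_add, h₁, h₂, lopG_add, hatActG_add]

theorem nlopPowG_hatActG (N : Fin d →₀ ℕ) (Q R : MvPolynomial (Fin d) A) :
    nlopPowG d (T ·) N (hatActG d (T ·) Q R) = hatActG d (T ·) (nlopPowG d (T ·) N Q) R :=
  nlopPowG_commute T (G := (hatActG d (T ·) · R)) (fun α Q => by
    simp only [nlopG_eq_neg_lopG, hatActG_neg, lopG_hatActG T hcomm hT]) N Q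

theorem skewAdjG_mul_C (h : A) (P : MvPolynomial (Fin d) A) :
    skewAdjG d (T ·) (P * C h) = hatActG d (T ·) (skewAdjG d (T ·) P) (C h) := by
  induction P using induction_on' with
  | monomial N a =>
    rw [mul_comm, C_mul_monomial, skewAdjG_monomial, skewAdjG_monomial, mul_comm, map_mul,
      ← hatActG_C T, nlopPowG_hatActG T hcomm hT]
  | add P Q hP hQ => rw [add_mul, skewAdjG_add, skewAdjG_add, hP, hQ, hatActG_add]

theorem skewAdjG_hatActG (g : A) (P : MvPolynomial (Fin d) A) :
    skewAdjG d (T ·) (hatActG d (T ·) P (C g)) = skewAdjG d (T ·) P * C g := by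
  conv_lhs => rw [← skewAdjG_skewAdjG T hcomm P]
  rw [← skewAdjG_mul_C T hcomm hT, skewAdjG_skewAdjG T hcomm]

theorem hatActG_C_one (Q : MvPolynomial (Fin d) A) : hatActG d (T ·) Q (C 1) = Q := by
  have hT1 : ∀ α, T α 1 = 0 := fun α => by simpa using hT α 1 1
  have hpow : ∀ N, lopPowG d (T ·) N (C 1) = monomial N 1 := fun N => by
    induction N using Finsupp.induction_add_single_one with
    | zero => rw [lopPowG_zero, C_apply]
    | add_single N α ih =>
      rw [lopPowG_add_single T hcomm, ih, lopG_monomial, hT1, monomial_zero, add_zero]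
  induction Q using induction_on' with
  | monomial N a => rw [hatActG_monomial, hpow, C_mul_monomial, mul_one]
  | add P Q hP hQ => rw [hatActG_add, hP, hQ]

end Operators


section Constants

variable {A : Type*} [CommRing A] [Algebra ℝ A] {d : ℕ} {B : A → A → MvPolynomial (Fin d) A}

theorem bracket_algebraMap_left (T : Fin d → A →+ A)
    (hcomm : ∀ α β, Function.Commute (T α) (T β))
    (hT : ∀ α x y, T α (x * y) = T α x * y + x * T α y) (hbil : BilinG d B)
    (hll : LLeibG d (T ·) B) (r : ℝ) (g : A) : B (algebraMap ℝ A r) g = 0 := by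
  have hone : B 1 g = 0 := by
    have h := hll 1 1 g
    rwa [one_mul, hatActG_C_one T hcomm hT, left_eq_add] at h
  rw [Algebra.algebraMap_eq_smul_one, hbil.2.1, hone, smul_zero]

theorem bracket_algebraMap_right (hbil : BilinG d B) (hrl : RLeibG d B) (r : ℝ) (f : A) :
    B f (algebraMap ℝ A r) = 0 := by
  have hone : B f 1 = 0 := by simpa using hrl f 1 1
  rw [Algebra.algebraMap_eq_smul_one, hbil.2.2.2, hone, smul_zero]

end Constants

namespace SkewOnG

variable {A : Type*} [CommRing A] {d : ℕ} {B : A → A → MvPolynomial (Fin d) A} {f g h : A}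

theorem of_eq_zero {T : Fin d → A → A} (hfg : B f g = 0) (hgf : B g f = 0) :
    SkewOnG d T B f g := by
  rw [SkewOnG, hfg, hgf, skewAdjG, support_zero, Finset.sum_empty, neg_zero]

variable {T : Fin d → A →+ A}

theorem add_left [Algebra ℝ A] (hbil : BilinG d B) {f₁ f₂ : A}
    (h₁ : SkewOnG d (T ·) B f₁ g) (h₂ : SkewOnG d (T ·) B f₂ g) :
    SkewOnG d (T ·) B (f₁ + f₂) g := by
  rw [SkewOnG, hbil.2.2.1, h₁, h₂, hbil.1, skewAdjG_add]
  ring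

theorem add_right [Algebra ℝ A] (hbil : BilinG d B) {g₁ g₂ : A}
    (h₁ : SkewOnG d (T ·) B f g₁) (h₂ : SkewOnG d (T ·) B f g₂) :
    SkewOnG d (T ·) B f (g₁ + g₂) := by
  rw [SkewOnG, hbil.1, h₁, h₂, hbil.2.2.1, skewAdjG_add]
  ring

theorem apply_left (hcomm : ∀ α β, Function.Commute (T α) (T β)) (hses : SesqG d (T ·) B)
    (α : Fin d) (hfg : SkewOnG d (T ·) B f g) : SkewOnG d (T ·) B (T α f) g := by
  rw [SkewOnG, (hses α g f).2, hfg, (hses α f g).1, skewAdjG_neg, skewAdjG_X_mul T hcomm,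
    lopG_neg, neg_neg]

theorem apply_right (hcomm : ∀ α β, Function.Commute (T α) (T β)) (hses : SesqG d (T ·) B)
    (α : Fin d) (hfg : SkewOnG d (T ·) B f g) : SkewOnG d (T ·) B f (T α g) := by
  rw [SkewOnG, (hses α g f).1, hfg, (hses α f g).2, skewAdjG_lopG T hcomm, mul_neg]

theorem mul_left (hcomm : ∀ α β, Function.Commute (T α) (T β))
    (hT : ∀ α x y, T α (x * y) = T α x * y + x * T α y) (hrl : RLeibG d B)
    (hll : LLeibG d (T ·) B) (hfh : SkewOnG d (T ·) B f h) (hgh : SkewOnG d (T ·) B g h) :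
    SkewOnG d (T ·) B (f * g) h := by
  rw [SkewOnG, hrl, hfh, hgh, hll, skewAdjG_add, skewAdjG_hatActG T hcomm hT,
    skewAdjG_hatActG T hcomm hT]
  ring

theorem mul_right (hcomm : ∀ α β, Function.Commute (T α) (T β))
    (hT : ∀ α x y, T α (x * y) = T α x * y + x * T α y) (hrl : RLeibG d B)
    (hll : LLeibG d (T ·) B) (hfg : SkewOnG d (T ·) B f g) (hfh : SkewOnG d (T ·) B f h) :
    SkewOnG d (T ·) B f (g * h) := by
  rw [SkewOnG, hll, hfg, hfh, hrl, skewAdjG_add, skewAdjG_mul_C T hcomm hT,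
    skewAdjG_mul_C T hcomm hT, hatActG_neg, hatActG_neg]
  ring

theorem algebraMap_left [Algebra ℝ A]
    (hcomm : ∀ α β, Function.Commute (T α) (T β))
    (hT : ∀ α x y, T α (x * y) = T α x * y + x * T α y) (hbil : BilinG d B) (hrl : RLeibG d B)
    (hll : LLeibG d (T ·) B) (r : ℝ) {g : A} : SkewOnG d (T ·) B (algebraMap ℝ A r) g :=
  of_eq_zero (bracket_algebraMap_left _ hcomm hT hbil hll r g)
    (bracket_algebraMap_right hbil hrl r g)

theorem algebraMap_right [Algebra ℝ A]
    (hcomm : ∀ α β, Function.Commute (T α) (T β))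
    (hT : ∀ α x y, T α (x * y) = T α x * y + x * T α y) (hbil : BilinG d B) (hrl : RLeibG d B)
    (hll : LLeibG d (T ·) B) (r : ℝ) {f : A} : SkewOnG d (T ·) B f (algebraMap ℝ A r) :=
  of_eq_zero (bracket_algebraMap_right hbil hrl r f)
    (bracket_algebraMap_left _ hcomm hT hbil hll r f)

end SkewOnG

noncomputable def tderDerivation (n d : ℕ) (α : Fin d) : Derivation ℝ (DP n d) (DP n d) :=
  mkDerivation ℝ fun v => X (v.1, v.2 + Eidx α)

section DifferentialPolynomials

variable {n d : ℕ}

theorem tder_eq_tderDerivation (α : Fin d) (f : DP n d) :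
    tder n d α f = tderDerivation n d α f := by
  classical
  let D : Derivation ℝ (DP n d) (DP n d) :=
    ∑ v ∈ f.vars, (X (v.1, v.2 + Eidx α) : DP n d) • pderiv v
  have hD (g : DP n d) : D g = ∑ v ∈ f.vars, X (v.1, v.2 + Eidx α) * pderiv v g := by
    rw [← Derivation.coeFnAddMonoidHom_apply, map_sum, Finset.sum_apply]
    simp_rw [Derivation.coeFnAddMonoidHom_apply, Derivation.smul_apply, smul_eq_mul]
  calc tder n d α f = D f := (hD f).symm
    _ = tderDerivation n d α f := derivation_eq_of_forall_mem_vars fun i hi => by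
      simp [hD, pderiv_X, Pi.single_apply, hi, tderDerivation, mkDerivation_X]

theorem tderDerivation_X (α : Fin d) (v : Fin n × MIdx d) :
    tderDerivation n d α (X v) = X (v.1, v.2 + Finsupp.single α 1) :=
  mkDerivation_X _ _ _

theorem tderDerivation_commute (α β : Fin d) :
    Function.Commute (tderDerivation n d α) (tderDerivation n d β) := by
  have h : ⁅tderDerivation n d α, tderDerivation n d β⁆ = 0 := derivation_ext fun v => by
    simp only [Derivation.commutator_apply, tderDerivation_X, Derivation.zero_apply,
      add_right_comm, sub_self]
  intro f
  simpa [Derivation.commutator_apply, sub_eq_zero] using congrArg (· f) h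

theorem skewOnG_of_generators (B : DP n d → DP n d → MvPolynomial (Fin d) (DP n d))
    (hbil : BilinG d B) (hses : SesqG d (tder n d) B) (hrl : RLeibG d B)
    (hll : LLeibG d (tder n d) B)
    (hgen : ∀ i j, SkewOnG d (tder n d) B (genU n d i) (genU n d j)) (f g : DP n d) :
    SkewOnG d (tder n d) B f g := by
  set T : Fin d → DP n d →+ DP n d := fun α => tderDerivation n d α
  have hT : tder n d = fun α => ⇑(T α) := funext fun α => funext (tder_eq_tderDerivation α)
  rw [hT] at hses hll hgen ⊢
  have hcomm : ∀ α β, Function.Commute (T α) (T β) := tderDerivation_commute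
  have hleib : ∀ α x y, T α (x * y) = T α x * y + x * T α y := fun α x y => by
    simp only [T, AddMonoidHom.coe_coe, Derivation.leibniz, smul_eq_mul]
    ring
  have hC (r : ℝ) : (C r : DP n d) = algebraMap ℝ (DP n d) r := by rw [algebraMap_eq]
  have hX : ∀ v w : Fin n × MIdx d, SkewOnG d (T ·) B (X v) (X w) := by
    rintro ⟨i, I⟩ ⟨j, J⟩
    induction I using Finsupp.induction_add_single_one with
    | zero =>
      induction J using Finsupp.induction_add_single_one with
      | zero => exact hgen i j
      | add_single J α ih => simpa [T, tderDerivation_X] using ih.apply_right hcomm hses α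
    | add_single I α ih => simpa [T, tderDerivation_X] using ih.apply_left hcomm hses α
  have hXg : ∀ v, SkewOnG d (T ·) B (X v) g := fun v => by
    induction g using MvPolynomial.induction_on with
    | C r => exact hC r ▸ .algebraMap_right hcomm hleib hbil hrl hll r
    | add p q hp hq => exact hp.add_right hbil hq
    | mul_X p w hp => exact hp.mul_right hcomm hleib hrl hll (hX v w)
  induction f using MvPolynomial.induction_on with
  | C r => exact hC r ▸ .algebraMap_left hcomm hleib hbil hrl hll r
  | add p q hp hq => exact hp.add_left hbil hq
  | mul_X p w hp => exact hp.mul_left hcomm hleib hrl hll (hXg w)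

end DifferentialPolynomials

theorem stmt3_general (n d : ℕ)
    (B : DP n d → DP n d → MvPolynomial (Fin d) (DP n d))
    (hbil : BilinG d B) (hses : SesqG d (tder n d) B)
    (hrl : RLeibG d B) (hll : LLeibG d (tder n d) B) :
    (∀ f g : DP n d, SkewOnG d (tder n d) B f g) ↔
      (∀ i j : Fin n, SkewOnG d (tder n d) B (genU n d i) (genU n d j)) :=
  ⟨fun h _ _ => h _ _, skewOnG_of_generators B hbil hses hrl hll⟩

theorem stmt3 (n d : ℕ) (hn : 1 ≤ n) (hd : 1 ≤ d)
    (B : DP n d → DP n d → MvPolynomial (Fin d) (DP n d))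
    (hbil : BilinG d B) (hses : SesqG d (tder n d) B)
    (hrl : RLeibG d B) (hll : LLeibG d (tder n d) B) :
    (∀ f g : DP n d, SkewOnG d (tder n d) B f g) ↔
      (∀ i j : Fin n, SkewOnG d (tder n d) B (genU n d i) (genU n d j)) :=
  stmt3_general n d B hbil hses hrl hll
end

section
/- Suppose the smooth family A^{ab}_i : ℝ² → ℝ (a,b,i ∈ {1,2}) satisfies the first-order symmetry conditions of the λ-bracket {p_i λ p_j}_1 = δ_{ij}λ_i, i.e. there exist constants c_1, c_2 ∈ ℝ and a smooth K : ℝ² → ℝ with A^{11}_1 = ∂²K/∂p², A^{11}_2 = 0, A^{12}_1 = ∂²K/∂p∂q, A^{12}_2 = c_1, A^{21}_1 = c_2, A^{21}_2 = ∂²K/∂p∂q, A^{22}_1 = 0, A^{22}_2 = ∂²K/∂q². Then there exists a smooth h : ℝ² → ℝ with A^{ab}_i = δ^a_i·∂²h/∂p_i∂p_b for all a,b,i ∈ {1,2} (i.e., A is the family of components of a Hamiltonian vector field of the bracket) if and only if c_1 = 0 and c_2 = 0. Consequently, the space of first-order symmetries modulo Hamiltonian vector fields is isomorphic to ℝ²: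 the first-order component of the first cohomology group of the Poisson Vertex Algebra of {·_λ·}_1 is not trivial. -/
/-- Partial derivative with respect to the first variable `p`. -/
noncomputable def pd1 (f : ℝ × ℝ → ℝ) : ℝ × ℝ → ℝ := fun x => fderiv ℝ f x (1, 0)

/-- Partial derivative with respect to the second variable `q`. -/
noncomputable def pd2 (f : ℝ × ℝ → ℝ) : ℝ × ℝ → ℝ := fun x => fderiv ℝ f x (0, 1)

/-- Partial derivative with respect to `p_j` (`p_1 := p`, `p_2 := q`). -/
noncomputable def pdm (j : Fin 2) : (ℝ × ℝ → ℝ) → (ℝ × ℝ → ℝ) :=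
  if j = 0 then pd1 else pd2

/-- Kronecker delta `δ^a_b`. -/
def kron (a b : Fin 2) : ℝ := if a = b then 1 else 0

lemma pd_apply (f : ℝ × ℝ → ℝ) (hf : ContDiff ℝ (⊤ : ℕ∞) f) (v w : ℝ × ℝ) (x : ℝ × ℝ) :
    fderiv ℝ (fun y => fderiv ℝ f y v) x w = fderiv ℝ (fderiv ℝ f) x w v := by
  have hd : DifferentiableAt ℝ (fderiv ℝ f) x :=
    ((hf.fderiv_right (m := (⊤ : ℕ∞)) (by simp)).differentiable (by simp)) x
  rw [fderiv_clm_apply hd (differentiableAt_const v)]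
  simp

lemma symm_second (f : ℝ × ℝ → ℝ) (hf : ContDiff ℝ (⊤ : ℕ∞) f) (v w : ℝ × ℝ) (x : ℝ × ℝ) :
    fderiv ℝ (fun y => fderiv ℝ f y v) x w = fderiv ℝ (fun y => fderiv ℝ f y w) x v := by
  rw [pd_apply f hf v w x, pd_apply f hf w v x]
  have h1 : ∀ y, HasFDerivAt f (fderiv ℝ f y) y := fun y =>
    ((hf.differentiable (by simp)) y).hasFDerivAt
  have h2 : HasFDerivAt (fderiv ℝ f) (fderiv ℝ (fderiv ℝ f) x) x :=
    (((hf.fderiv_right (m := (⊤ : ℕ∞)) (by simp)).differentiable (by simp)) x).hasFDerivAt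
  exact (second_derivative_symmetric h1 h2 w v)

lemma pd_comm (f : ℝ × ℝ → ℝ) (hf : ContDiff ℝ (⊤ : ℕ∞) f) : pd1 (pd2 f) = pd2 (pd1 f) := by
  funext x
  exact symm_second f hf (0, 1) (1, 0) x

theorem stmt9 (A : Fin 2 → Fin 2 → Fin 2 → ℝ × ℝ → ℝ)
    (hA : ∀ a b i, ContDiff ℝ (⊤ : ℕ∞) (A a b i))
    (c₁ c₂ : ℝ) (K : ℝ × ℝ → ℝ) (hK : ContDiff ℝ (⊤ : ℕ∞) K)
    (h000 : A 0 0 0 = pd1 (pd1 K)) (h001 : A 0 0 1 = 0)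
    (h010 : A 0 1 0 = pd1 (pd2 K)) (h011 : A 0 1 1 = (fun _ => c₁))
    (h100 : A 1 0 0 = (fun _ => c₂)) (h101 : A 1 0 1 = pd1 (pd2 K))
    (h110 : A 1 1 0 = 0) (h111 : A 1 1 1 = pd2 (pd2 K)) :
    (∃ h : ℝ × ℝ → ℝ, ContDiff ℝ (⊤ : ℕ∞) h ∧
        ∀ (a b i : Fin 2), A a b i = fun x => kron a i * pdm i (pdm b h) x) ↔
      (c₁ = 0 ∧ c₂ = 0) := by
  constructor
  · rintro ⟨h, hh, heq⟩
    constructor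
    · have := congrFun (h011 ▸ heq 0 1 1) (0, 0)
      simpa [kron] using this
    · have := congrFun (h100 ▸ heq 1 0 0) (0, 0)
      simpa [kron] using this
  · rintro ⟨hc₁, hc₂⟩
    refine ⟨K, hK, ?_⟩
    intro a b i
    fin_cases a <;> fin_cases b <;> fin_cases i <;>
      simp only [kron, pdm, if_true, if_false, one_mul, zero_mul] <;>
      simp_all [pd_comm K hK] <;> rfl
end

section
/- Let A^{ab}_i : ℝ² → ℝ (a,b,i ∈ {1,2}) be smooth functions satisfying the first-order symmetry conditions of the λ-bracket {p_i λ p_j}_2 = δ_{i+j,3}λ_1 + δ_{ij}δ_{j2}λ_2, namely: A^{12}_2 = A^{11}_1; A^{22}_1 = 0; A^{12}_1 + A^{21}_1 = A^{22}_2; A^{21}_2 − A^{11}_1 is a constant c_1; A^{12}_1 − A^{22}_2 is a constant c_2; ∂A^{11}_2/∂q = ∂A^{21}_2/∂p; and ∂A^{21}_2/∂q = ∂A^{22}_2/∂p. Then there exists a smooth h : ℝ² → ℝ with A^{11}_1 = A^{12}_2 = A^{21}_2 = ∂²h/∂p∂q, A^{21}_1 = A^{22}_1 = 0, A^{11}_2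 = ∂²h/∂p², and A^{12}_1 = A^{22}_2 = ∂²h/∂q² (the components of a Hamiltonian vector field of the bracket) if and only if c_1 = 0 and c_2 = 0. Consequently, the first-order component of the first cohomology group of the Poisson Vertex Algebra of {·_λ·}_2 is not trivial and is isomorphic to ℝ². -/
open MeasureTheory

set_option maxHeartbeats 1000000

noncomputable def intSeries (a : ℝ) (G : FormalMultilinearSeries ℝ (ℝ × ℝ) ((ℝ × ℝ) →L[ℝ] ℝ)) :
    FormalMultilinearSeries ℝ (ℝ × ℝ) ℝ
  | 0 => (continuousMultilinearCurryFin0 ℝ (ℝ × ℝ) ℝ).symm a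
  | (m+1) => (((m:ℝ) + 1))⁻¹ • (G m).uncurryRight

@[simp] lemma intSeries_zero (a : ℝ) (G : FormalMultilinearSeries ℝ (ℝ × ℝ) ((ℝ × ℝ) →L[ℝ] ℝ)) :
    intSeries a G 0 = (continuousMultilinearCurryFin0 ℝ (ℝ × ℝ) ℝ).symm a := rfl

@[simp] lemma intSeries_succ (a : ℝ) (G : FormalMultilinearSeries ℝ (ℝ × ℝ) ((ℝ × ℝ) →L[ℝ] ℝ))
    (m : ℕ) : intSeries a G (m+1) = (((m:ℝ) + 1))⁻¹ • (G m).uncurryRight := rfl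

lemma clm_ext2 {f g : ℝ × ℝ →L[ℝ] ℝ} (h1 : f (1,0) = g (1,0)) (h2 : f (0,1) = g (0,1)) :
    f = g := by
  apply ContinuousLinearMap.ext
  intro w
  have hw : (w : ℝ × ℝ) = w.1 • ((1:ℝ),(0:ℝ)) + w.2 • ((0:ℝ),(1:ℝ)) := by
    simp [Prod.ext_iff]
  rw [hw, map_add, map_add, _root_.map_smul, _root_.map_smul, _root_.map_smul, _root_.map_smul, h1, h2]

lemma fderiv_apply_eq (u : ℝ × ℝ → ℝ) (z w : ℝ × ℝ) :
    fderiv ℝ u z w = w.1 * pd1 u z + w.2 * pd2 u z := by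
  have hw : (w : ℝ × ℝ) = w.1 • ((1:ℝ),(0:ℝ)) + w.2 • ((0:ℝ),(1:ℝ)) := by
    simp [Prod.ext_iff]
  rw [hw, map_add, _root_.map_smul, _root_.map_smul]
  simp [pd1, pd2, smul_eq_mul]

lemma potential (u v : ℝ × ℝ → ℝ) (hu : ContDiff ℝ (⊤ : ℕ∞) u) (hv : ContDiff ℝ (⊤ : ℕ∞) v)
    (hcl : ∀ x, pd2 u x = pd1 v x) :
    ∃ h : ℝ × ℝ → ℝ, ContDiff ℝ (⊤ : ℕ∞) h ∧ pd1 h = u ∧ pd2 h = v := by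
  classical
  set idC : (ℝ × ℝ) →L[ℝ] (ℝ × ℝ) := ContinuousLinearMap.id ℝ (ℝ × ℝ) with hidC
  set fstC : (ℝ × ℝ) →L[ℝ] ℝ := ContinuousLinearMap.fst ℝ ℝ ℝ with hfstC
  set sndC : (ℝ × ℝ) →L[ℝ] ℝ := ContinuousLinearMap.snd ℝ ℝ ℝ with hsndC
  set F : (ℝ × ℝ) → ℝ → ℝ := fun x t => u (t • x) * x.1 + v (t • x) * x.2 with hF
  set F' : (ℝ × ℝ) → ℝ → ((ℝ × ℝ) →L[ℝ] ℝ) := fun x t =>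
    (u (t • x) • fstC + x.1 • ((fderiv ℝ u (t • x)).comp (t • idC)))
    + (v (t • x) • sndC + x.2 • ((fderiv ℝ v (t • x)).comp (t • idC))) with hF'
  set h : ℝ × ℝ → ℝ := fun x => ∫ t in (0:ℝ)..1, F x t with hh
  set L : (ℝ × ℝ) → ((ℝ × ℝ) →L[ℝ] ℝ) := fun x => u x • fstC + v x • sndC with hL
  -- basic derivative facts
  have hud : Differentiable ℝ u := hu.differentiable (by simp)
  have hvd : Differentiable ℝ v := hv.differentiable (by simp)
  have hsm : ∀ (t : ℝ) (x : ℝ × ℝ), HasFDerivAt (fun y : ℝ × ℝ => t • y) (t • idC) x :=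
    fun t x => (hasFDerivAt_id x).const_smul t
  have hder : ∀ (x : ℝ × ℝ) (t : ℝ), HasFDerivAt (fun y => F y t) (F' x t) x := by
    intro x t
    have hu' : HasFDerivAt (fun y : ℝ × ℝ => u (t • y))
        ((fderiv ℝ u (t • x)).comp (t • idC)) x :=
      (hud (t • x)).hasFDerivAt.comp x (hsm t x)
    have hv' : HasFDerivAt (fun y : ℝ × ℝ => v (t • y))
        ((fderiv ℝ v (t • x)).comp (t • idC)) x :=
      (hvd (t • x)).hasFDerivAt.comp x (hsm t x)
    exact (hu'.mul (hasFDerivAt_fst)).add (hv'.mul (hasFDerivAt_snd))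
  -- continuity of F'
  have hcontF' : Continuous (fun p : (ℝ × ℝ) × ℝ => F' p.1 p.2) := by
    have hsc : Continuous (fun p : (ℝ × ℝ) × ℝ => p.2 • p.1) :=
      continuous_snd.smul continuous_fst
    have hidc : Continuous (fun p : (ℝ × ℝ) × ℝ => p.2 • idC) :=
      continuous_snd.smul continuous_const
    have hcu : Continuous (fderiv ℝ u) := (hu.continuous_fderiv (by simp))
    have hcv : Continuous (fderiv ℝ v) := (hv.continuous_fderiv (by simp))
    exact (((hu.continuous.comp hsc).smul continuous_const).add
        ((continuous_fst.fst).smul ((hcu.comp hsc).clm_comp hidc))).add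
      (((hv.continuous.comp hsc).smul continuous_const).add
        ((continuous_fst.snd).smul ((hcv.comp hsc).clm_comp hidc)))
  have hcontF : Continuous (fun p : (ℝ × ℝ) × ℝ => F p.1 p.2) := by
    have hsc : Continuous (fun p : (ℝ × ℝ) × ℝ => p.2 • p.1) :=
      continuous_snd.smul continuous_fst
    exact ((hu.continuous.comp hsc).mul continuous_fst.fst).add
      ((hv.continuous.comp hsc).mul continuous_fst.snd)
  -- the key derivative
  have hmain : ∀ x₀ : ℝ × ℝ,
      HasFDerivAt h (∫ t in (0:ℝ)..1, F' x₀ t) x₀ := by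
    intro x₀
    obtain ⟨C, hC⟩ :=
      ((isCompact_closedBall x₀ 1).prod isCompact_Icc).exists_bound_of_continuousOn
        (f := fun p : (ℝ × ℝ) × ℝ => F' p.1 p.2) hcontF'.continuousOn
    apply intervalIntegral.hasFDerivAt_integral_of_dominated_of_fderiv_le (s := Metric.ball x₀ 1) (bound := fun _ => C)
      (Metric.ball_mem_nhds x₀ one_pos)
    · exact Filter.Eventually.of_forall fun x =>
        (hcontF.comp (Continuous.prodMk_right x)).aestronglyMeasurable
    · exact (hcontF.comp (Continuous.prodMk_right x₀)).intervalIntegrable 0 1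
    · exact (hcontF'.comp (Continuous.prodMk_right x₀)).aestronglyMeasurable
    · refine Filter.Eventually.of_forall fun t ht x hx => ?_
      have ht' : t ∈ Set.Icc (0:ℝ) 1 := by
        rw [Set.uIoc_of_le (by norm_num : (0:ℝ) ≤ 1)] at ht
        exact ⟨le_of_lt ht.1, ht.2⟩
      exact hC (x, t) ⟨Metric.ball_subset_closedBall hx, ht'⟩
    · exact intervalIntegrable_const
    · exact Filter.Eventually.of_forall fun t ht x hx => hder x t
  -- compute the derivative's value on basis vectors
  have hFi : ∀ x₀ : ℝ × ℝ, IntervalIntegrable (F' x₀) MeasureTheory.volume 0 1 :=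
    fun x₀ => (hcontF'.comp (Continuous.prodMk_right x₀)).intervalIntegrable 0 1
  have hval1 : ∀ x₀ : ℝ × ℝ, (∫ t in (0:ℝ)..1, F' x₀ t) (1,0) = u x₀ := by
    intro x₀
    rw [ContinuousLinearMap.intervalIntegral_apply (hFi x₀) (1,0)]
    have key : ∀ t : ℝ, HasDerivAt (fun s : ℝ => s * u (s • x₀)) (F' x₀ t (1,0)) t := by
      intro t
      have h1 : HasDerivAt (fun s : ℝ => s • x₀) x₀ t := by
        simpa using (hasDerivAt_id t).smul_const x₀
      have h2 : HasDerivAt (fun s : ℝ => u (s • x₀)) (fderiv ℝ u (t • x₀) x₀) t :=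
        ((hud (t • x₀)).hasFDerivAt).comp_hasDerivAt t h1
      have h3 := (hasDerivAt_id t).mul h2
      have : F' x₀ t (1,0) = 1 * u (t • x₀) + t * (fderiv ℝ u (t • x₀) x₀) := by
        simp only [hF', ContinuousLinearMap.add_apply, ContinuousLinearMap.smul_apply,
          ContinuousLinearMap.comp_apply, ContinuousLinearMap.smul_apply,
          ContinuousLinearMap.id_apply, hidC, hfstC, hsndC, ContinuousLinearMap.coe_fst',
          ContinuousLinearMap.coe_snd', _root_.map_smul]
        rw [fderiv_apply_eq u (t • x₀) x₀, fderiv_apply_eq u, fderiv_apply_eq v]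
        simp [hcl (t • x₀)]
        ring
      rw [this]
      exact h3
    have := intervalIntegral.integral_eq_sub_of_hasDerivAt
      (f := fun s : ℝ => s * u (s • x₀)) (fun t _ => key t)
      (by
        have : Continuous (fun t : ℝ => F' x₀ t (1,0)) :=
          ((hcontF'.comp (Continuous.prodMk_right x₀)).clm_apply continuous_const)
        exact this.intervalIntegrable 0 1)
    rw [this]
    simp
  have hval2 : ∀ x₀ : ℝ × ℝ, (∫ t in (0:ℝ)..1, F' x₀ t) (0,1) = v x₀ := by
    intro x₀
    rw [ContinuousLinearMap.intervalIntegral_apply (hFi x₀) (0,1)]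
    have key : ∀ t : ℝ, HasDerivAt (fun s : ℝ => s * v (s • x₀)) (F' x₀ t (0,1)) t := by
      intro t
      have h1 : HasDerivAt (fun s : ℝ => s • x₀) x₀ t := by
        simpa using (hasDerivAt_id t).smul_const x₀
      have h2 : HasDerivAt (fun s : ℝ => v (s • x₀)) (fderiv ℝ v (t • x₀) x₀) t :=
        ((hvd (t • x₀)).hasFDerivAt).comp_hasDerivAt t h1
      have h3 := (hasDerivAt_id t).mul h2
      have : F' x₀ t (0,1) = 1 * v (t • x₀) + t * (fderiv ℝ v (t • x₀) x₀) := by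
        simp only [hF', ContinuousLinearMap.add_apply, ContinuousLinearMap.smul_apply,
          ContinuousLinearMap.comp_apply, ContinuousLinearMap.smul_apply,
          ContinuousLinearMap.id_apply, hidC, hfstC, hsndC, ContinuousLinearMap.coe_fst',
          ContinuousLinearMap.coe_snd', _root_.map_smul]
        rw [fderiv_apply_eq v (t • x₀) x₀, fderiv_apply_eq u, fderiv_apply_eq v]
        simp [hcl (t • x₀)]
        ring
      rw [this]
      exact h3
    have := intervalIntegral.integral_eq_sub_of_hasDerivAt
      (f := fun s : ℝ => s * v (s • x₀)) (fun t _ => key t)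
      (by
        have : Continuous (fun t : ℝ => F' x₀ t (0,1)) :=
          ((hcontF'.comp (Continuous.prodMk_right x₀)).clm_apply continuous_const)
        exact this.intervalIntegrable 0 1)
    rw [this]
    simp
  have hmain' : ∀ x : ℝ × ℝ, HasFDerivAt h (L x) x := by
    intro x
    have : (∫ t in (0:ℝ)..1, F' x t) = L x := by
      apply clm_ext2
      · rw [hval1 x]; simp [hL, hfstC, hsndC]
      · rw [hval2 x]; simp [hL, hfstC, hsndC]
    exact this ▸ hmain x
  have hfd : fderiv ℝ h = L := funext fun x => (hmain' x).fderiv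
  refine ⟨h, ?_, ?_, ?_⟩
  · rw [contDiff_infty_iff_fderiv]
    refine ⟨fun x => (hmain' x).differentiableAt, ?_⟩
    rw [hfd]
    exact (hu.smul contDiff_const).add (hv.smul contDiff_const)
  · funext x
    simp only [pd1, hfd, hL]
    simp [hfstC, hsndC]
  · funext x
    simp only [pd2, hfd, hL]
    simp [hfstC, hsndC]

theorem stmt10 (A : Fin 2 → Fin 2 → Fin 2 → ℝ × ℝ → ℝ)
    (hA : ∀ a b i, ContDiff ℝ (⊤ : ℕ∞) (A a b i))
    (c₁ c₂ : ℝ)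
    (h1 : A 0 1 1 = A 0 0 0)
    (h2 : A 1 1 0 = 0)
    (h3 : ∀ x, A 0 1 0 x + A 1 0 0 x = A 1 1 1 x)
    (h4 : ∀ x, A 1 0 1 x - A 0 0 0 x = c₁)
    (h5 : ∀ x, A 0 1 0 x - A 1 1 1 x = c₂)
    (h6 : ∀ x, pd2 (A 0 0 1) x = pd1 (A 1 0 1) x)
    (h7 : ∀ x, pd2 (A 1 0 1) x = pd1 (A 1 1 1) x) :
    (∃ h : ℝ × ℝ → ℝ, ContDiff ℝ (⊤ : ℕ∞) h ∧
        A 0 0 0 = pd1 (pd2 h) ∧ A 0 1 1 = pd1 (pd2 h) ∧ A 1 0 1 = pd1 (pd2 h) ∧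
        A 1 0 0 = 0 ∧ A 1 1 0 = 0 ∧
        A 0 0 1 = pd1 (pd1 h) ∧
        A 0 1 0 = pd2 (pd2 h) ∧ A 1 1 1 = pd2 (pd2 h)) ↔
      (c₁ = 0 ∧ c₂ = 0) := by
  constructor
  · rintro ⟨h, -, e000, -, e101', -, -, -, e010', e111'⟩
    constructor
    · have hx := h4 0
      rw [e101', e000] at hx
      simpa using hx.symm
    · have hx := h5 0
      rw [e010', e111'] at hx
      simpa using hx.symm
  · rintro ⟨hc1, hc2⟩
    have e101 : A 1 0 1 = A 0 0 0 := funext fun x => by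
      have := h4 x; rw [hc1] at this; linarith
    have e010 : A 0 1 0 = A 1 1 1 := funext fun x => by
      have := h5 x; rw [hc2] at this; linarith
    have e100 : A 1 0 0 = 0 := funext fun x => by
      have h3x := h3 x
      have h5x := h5 x
      rw [hc2] at h5x
      simp only [Pi.zero_apply]
      linarith
    obtain ⟨g, hgs, hg1, hg2⟩ := potential (A 0 0 1) (A 0 0 0) (hA 0 0 1) (hA 0 0 0)
      (fun x => by rw [h6 x, e101])
    obtain ⟨f, hfs, hf1, hf2⟩ := potential (A 0 0 0) (A 1 1 1) (hA 0 0 0) (hA 1 1 1)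
      (fun x => by rw [← e101, h7 x])
    obtain ⟨h, hhs, hh1, hh2⟩ := potential g f hgs hfs (fun x => by rw [hg2, hf1])
    refine ⟨h, hhs, ?_, ?_, ?_, e100, h2, ?_, ?_, ?_⟩
    · rw [hh2]; exact hf1.symm
    · rw [h1, hh2]; exact hf1.symm
    · rw [e101, hh2]; exact hf1.symm
    · rw [hh1]; exact hg1.symm
    · rw [e010, hh2]; exact hf2.symm
    · rw [hh2]; exact hf2.symm
end

section
/- The identity E_{ij}(λ,v,w,z) + Ê_{ji}(λ,v,w,z) = 0 holds for all i,j ∈ {1,…,n} and all (λ,v,w,z) if and only if the following four conditions hold identically on ℝ^n for all a,b ∈ {1,…,d} and i,j,l,m ∈ {1,…,n}: (1) A^{ab}_{ij} = −A^{ab}_{ji}; (2) ∂A^{ab}_{ij}/∂u^l = (1/2)(B^{a,bl}_{ij} − B^{a,bl}_{ji}) = (1/2)(B^{b,al}_{ij} − B^{b,al}_{ji}); (3) B^{a,bl}_{ij} + B^{b,al}_{ji} = B^{b,al}_{ij} + B^{a,bl}_{ji} = 2D^{ab,l}_{ij} + 2D^{ab,l}_{ji}; (4) ∂B^{a,bm}_{ij}/∂u^l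 + ∂B^{b,al}_{ji}/∂u^m = ∂B^{b,al}_{ij}/∂u^m + ∂B^{a,bm}_{ji}/∂u^l = 2C^{al,bm}_{ij} + 2C^{al,bm}_{ji}. (This is the criterion for a homogeneous second-degree λ-bracket with coefficients A, B, C, D to be skewsymmetric.) -/
/-- Partial derivative `∂/∂u^l` of a function on `ℝ^n`. -/
noncomputable def pdn {n : ℕ} (l : Fin n) (f : (Fin n → ℝ) → ℝ) : (Fin n → ℝ) → ℝ :=
  fun x => fderiv ℝ f x (Pi.single l 1)

/-- `E_{ij}(λ,v,w,z)`: the evaluation on the 2-jet `(v,w,z)` of the homogeneous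
second-degree `λ`-bracket with coefficients `A`, `B`, `C`, `D`. -/
noncomputable def Ebr {n d : ℕ}
    (Am : Fin d → Fin d → Fin n → Fin n → (Fin n → ℝ) → ℝ)
    (Bm : Fin d → Fin d → Fin n → Fin n → Fin n → (Fin n → ℝ) → ℝ)
    (Cm : Fin d → Fin n → Fin d → Fin n → Fin n → Fin n → (Fin n → ℝ) → ℝ)
    (Dm : Fin d → Fin d → Fin n → Fin n → Fin n → (Fin n → ℝ) → ℝ)
    (i j : Fin n) (lam : Fin d → ℝ) (v : Fin n → ℝ)
    (w : Fin d → Fin n → ℝ) (z : Fin d → Fin d → Fin n → ℝ) : ℝ :=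
  (∑ a, ∑ b, Am a b i j v * lam a * lam b) +
  (∑ a, ∑ b, ∑ l, Bm a b l i j v * lam a * w b l) +
  (∑ a, ∑ l, ∑ b, ∑ m, Cm a l b m i j v * w a l * w b m) +
  (∑ a, ∑ b, ∑ l, Dm a b l i j v * z a b l)

/-- `Ê_{ij}(λ,v,w,z)`: the evaluation on the 2-jet `(v,w,z)` of
`→{u^j_{−λ−∂} u^i}` for the same bracket. -/
noncomputable def Ehat {n d : ℕ}
    (Am : Fin d → Fin d → Fin n → Fin n → (Fin n → ℝ) → ℝ)
    (Bm : Fin d → Fin d → Fin n → Fin n → Fin n → (Fin n → ℝ) → ℝ)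
    (Cm : Fin d → Fin n → Fin d → Fin n → Fin n → Fin n → (Fin n → ℝ) → ℝ)
    (Dm : Fin d → Fin d → Fin n → Fin n → Fin n → (Fin n → ℝ) → ℝ)
    (i j : Fin n) (lam : Fin d → ℝ) (v : Fin n → ℝ)
    (w : Fin d → Fin n → ℝ) (z : Fin d → Fin d → Fin n → ℝ) : ℝ :=
  (∑ a, ∑ b, Am a b i j v * lam a * lam b) +
  (2 * ∑ a, ∑ b, ∑ l, lam a * pdn l (Am a b i j) v * w b l) +
  (∑ a, ∑ b, ∑ l, ∑ m, pdn l (pdn m (Am a b i j)) v * w a l * w b m) +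
  (∑ a, ∑ b, ∑ l, pdn l (Am a b i j) v * z a b l) -
  (∑ a, ∑ b, ∑ l, Bm a b l i j v * lam a * w b l) -
  (∑ a, ∑ b, ∑ l, ∑ m, pdn m (Bm a b l i j) v * w a m * w b l) -
  (∑ a, ∑ b, ∑ l, Bm a b l i j v * z a b l) +
  (∑ a, ∑ l, ∑ b, ∑ m, Cm a l b m i j v * w a l * w b m) +
  (∑ a, ∑ b, ∑ l, Dm a b l i j v * z a b l)

lemma pdn_comb {n : ℕ} (l : Fin n) (f g : (Fin n → ℝ) → ℝ)
    (hf : Differentiable ℝ f) (hg : Differentiable ℝ g) (v : Fin n → ℝ) :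
    pdn l (fun v => (1/2) * (f v - g v)) v = (1/2) * (pdn l f v - pdn l g v) := by
  unfold pdn
  rw [fderiv_const_mul (show DifferentiableAt ℝ (fun y => f y - g y) v from (hf v).sub (hg v)),
    fderiv_fun_sub (hf v) (hg v)]
  simp

lemma pdn_clairaut {n : ℕ} (l m : Fin n) (f : (Fin n → ℝ) → ℝ)
    (hf : ContDiff ℝ (⊤ : ℕ∞) f) (v : Fin n → ℝ) :
    pdn l (pdn m f) v = pdn m (pdn l f) v := by
  have hd1 : ContDiff ℝ (⊤ : ℕ∞) (fderiv ℝ f) := hf.fderiv_right (by simp)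
  have hd : DifferentiableAt ℝ (fderiv ℝ f) v := (hd1.differentiable (by simp)) v
  have h1 : ∀ (e e' : Fin n → ℝ),
      fderiv ℝ (fun x => fderiv ℝ f x e) v e' = fderiv ℝ (fderiv ℝ f) v e' e := by
    intro e e'
    rw [fderiv_clm_apply hd (differentiableAt_const e)]
    simp
  unfold pdn
  rw [h1, h1]
  exact (hf.contDiffAt.isSymmSndFDerivAt (by simp; exact WithTop.coe_le_coe.mpr (le_top : (2:ℕ∞) ≤ ⊤))).eq _ _

lemma sum3_swap {α β : Type*} [Fintype α] [Fintype β] (f : α → α → β → ℝ) :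
    ∑ a, ∑ b, ∑ l, f a b l = ∑ a, ∑ b, ∑ l, f b a l := by
  rw [Finset.sum_comm]

lemma sum4_swap {α β : Type*} [Fintype α] [Fintype β] (f : α → α → β → β → ℝ) :
    ∑ a, ∑ b, ∑ l, ∑ m, f a b l m = ∑ a, ∑ b, ∑ l, ∑ m, f b a m l := by
  rw [Finset.sum_comm]
  exact Finset.sum_congr rfl fun b _ => Finset.sum_congr rfl fun a _ => Finset.sum_comm

lemma sum4_mid_swap {α β : Type*} [Fintype α] [Fintype β] (f : α → β → α → β → ℝ) :
    ∑ a, ∑ l, ∑ b, ∑ m, f a l b m = ∑ a, ∑ b, ∑ l, ∑ m, f a l b m :=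
  Finset.sum_congr rfl fun a _ => Finset.sum_comm

lemma sum4_inner_swap {α β : Type*} [Fintype α] [Fintype β] (f : α → α → β → β → ℝ) :
    ∑ a, ∑ b, ∑ l, ∑ m, f a b l m = ∑ a, ∑ b, ∑ l, ∑ m, f a b m l :=
  Finset.sum_congr rfl fun a _ => Finset.sum_congr rfl fun b _ => Finset.sum_comm

lemma sum_ite_irrel' {α : Type*} (s : Finset α) (c : Prop) [Decidable c] (f : α → ℝ) :
    (∑ x ∈ s, if c then f x else 0) = if c then ∑ x ∈ s, f x else 0 := by
  split <;> simp

theorem stmt12 (n d : ℕ) (hn : 1 ≤ n) (hd : 1 ≤ d)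
    (Am : Fin d → Fin d → Fin n → Fin n → (Fin n → ℝ) → ℝ)
    (Bm : Fin d → Fin d → Fin n → Fin n → Fin n → (Fin n → ℝ) → ℝ)
    (Cm : Fin d → Fin n → Fin d → Fin n → Fin n → Fin n → (Fin n → ℝ) → ℝ)
    (Dm : Fin d → Fin d → Fin n → Fin n → Fin n → (Fin n → ℝ) → ℝ)
    (hAs : ∀ a b i j, ContDiff ℝ (⊤ : ℕ∞) (Am a b i j))
    (hBs : ∀ a b l i j, ContDiff ℝ (⊤ : ℕ∞) (Bm a b l i j))
    (hCs : ∀ a l b m i j, ContDiff ℝ (⊤ : ℕ∞) (Cm a l b m i j))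
    (hDs : ∀ a b l i j, ContDiff ℝ (⊤ : ℕ∞) (Dm a b l i j))
    (hAsym : ∀ a b i j, Am a b i j = Am b a i j)
    (hDsym : ∀ a b l i j, Dm a b l i j = Dm b a l i j)
    (hCsym : ∀ a l b m i j, Cm a l b m i j = Cm b m a l i j) :
    (∀ (i j : Fin n) (lam : Fin d → ℝ) (v : Fin n → ℝ)
        (w : Fin d → Fin n → ℝ) (z : Fin d → Fin d → Fin n → ℝ),
        (∀ a b l, z a b l = z b a l) →
        Ebr Am Bm Cm Dm i j lam v w z + Ehat Am Bm Cm Dm j i lam v w z = 0) ↔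
    ((∀ (a b : Fin d) (i j : Fin n) (v : Fin n → ℝ),
        Am a b i j v = -Am a b j i v) ∧
     (∀ (a b : Fin d) (i j l : Fin n) (v : Fin n → ℝ),
        pdn l (Am a b i j) v = (1/2) * (Bm a b l i j v - Bm a b l j i v) ∧
        (1/2) * (Bm a b l i j v - Bm a b l j i v) =
          (1/2) * (Bm b a l i j v - Bm b a l j i v)) ∧
     (∀ (a b : Fin d) (i j l : Fin n) (v : Fin n → ℝ),
        Bm a b l i j v + Bm b a l j i v = Bm b a l i j v + Bm a b l j i v ∧
        Bm b a l i j v + Bm a b l j i v = 2 * Dm a b l i j v + 2 * Dm a b l j i v) ∧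
     (∀ (a b : Fin d) (i j l m : Fin n) (v : Fin n → ℝ),
        pdn l (Bm a b m i j) v + pdn m (Bm b a l j i) v =
          pdn m (Bm b a l i j) v + pdn l (Bm a b m j i) v ∧
        pdn m (Bm b a l i j) v + pdn l (Bm a b m j i) v =
          2 * Cm a l b m i j v + 2 * Cm a l b m j i v)) := by
  have hBdiff : ∀ a b l i' j', Differentiable ℝ (Bm a b l i' j') :=
    fun a b l i' j' => (hBs a b l i' j').differentiable (by simp)
  constructor
  · intro H
    simp only [Ebr, Ehat] at H
    have c1 : ∀ (a b : Fin d) (i j : Fin n) (v : Fin n → ℝ),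
        Am a b i j v = -Am a b j i v := by
      intro a b i j v
      have ha := H i j (fun c => if c = a then 1 else 0) v 0 0 (fun _ _ _ => rfl)
      have hb := H i j (fun c => if c = b then 1 else 0) v 0 0 (fun _ _ _ => rfl)
      have hab := H i j (fun c => (if c = a then 1 else 0) + (if c = b then 1 else 0)) v 0 0
        (fun _ _ _ => rfl)
      simp only [Pi.zero_apply, mul_zero, zero_mul, Finset.sum_const_zero, add_zero, zero_add,
        mul_ite, ite_mul, mul_one, one_mul, mul_neg, neg_mul, neg_neg, mul_add, add_mul,
        Finset.sum_add_distrib, Finset.sum_ite_eq', Finset.mem_univ, if_true, sub_zero, zero_sub,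
        Finset.sum_neg_distrib, neg_zero, sum_ite_irrel'] at ha hb hab
      have e1 := congrFun (hAsym b a i j) v
      have e2 := congrFun (hAsym b a j i) v
      linarith [ha, hb, hab, e1, e2]
    have hN : ∀ (a b : Fin d) (l : Fin n) (i j : Fin n) (v : Fin n → ℝ),
        Bm a b l i j v + 2 * pdn l (Am a b j i) v - Bm a b l j i v = 0 := by
      intro a b l i j v
      have hp := H i j (fun c => if c = a then 1 else 0) v
        (fun b' l' => if b' = b then (if l' = l then 1 else 0) else 0) 0 (fun _ _ _ => rfl)
      have hm := H i j (fun c => if c = a then 1 else 0) v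
        (fun b' l' => if b' = b then (if l' = l then -1 else 0) else 0) 0 (fun _ _ _ => rfl)
      simp only [Pi.zero_apply, mul_zero, zero_mul, Finset.sum_const_zero, add_zero, zero_add,
        mul_ite, ite_mul, mul_one, one_mul, mul_neg, neg_mul, neg_neg, mul_add, add_mul,
        Finset.sum_add_distrib, Finset.sum_ite_eq', Finset.mem_univ, if_true, sub_zero, zero_sub,
        Finset.sum_neg_distrib, neg_zero, sum_ite_irrel'] at hp hm
      linarith [hp, hm]
    have c2 : ∀ (a b : Fin d) (i j l : Fin n) (v : Fin n → ℝ),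
        pdn l (Am a b i j) v = (1/2) * (Bm a b l i j v - Bm a b l j i v) := by
      intro a b i j l v
      have h := hN a b l j i v
      linarith [h]
    have c2' : ∀ (a b : Fin d) (i j l : Fin n) (v : Fin n → ℝ),
        (1/2) * (Bm a b l i j v - Bm a b l j i v)
          = (1/2) * (Bm b a l i j v - Bm b a l j i v) := by
      intro a b i j l v
      have e : pdn l (Am a b i j) v = pdn l (Am b a i j) v := by rw [hAsym a b i j]
      have q1 := c2 a b i j l v
      have q2 := c2 b a i j l v
      linarith [e, q1, q2]
    have hG : ∀ (a b : Fin d) (l : Fin n) (i j : Fin n) (v : Fin n → ℝ),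
        (Dm a b l i j v + pdn l (Am a b j i) v - Bm a b l j i v + Dm a b l j i v) +
        (Dm b a l i j v + pdn l (Am b a j i) v - Bm b a l j i v + Dm b a l j i v) = 0 := by
      intro a b l i j v
      have hg := H i j 0 v 0
        (fun a' b' l' => ((if a' = a then (1:ℝ) else 0) * (if b' = b then 1 else 0) +
          (if a' = b then 1 else 0) * (if b' = a then 1 else 0)) * (if l' = l then 1 else 0))
        (fun a' b' l' => by ring)
      simp only [Pi.zero_apply, mul_zero, zero_mul, Finset.sum_const_zero, add_zero, zero_add,
        mul_ite, ite_mul, mul_one, one_mul, mul_neg, neg_mul, neg_neg, mul_add, add_mul,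
        Finset.sum_add_distrib, Finset.sum_ite_eq', Finset.mem_univ, if_true, sub_zero, zero_sub,
        Finset.sum_neg_distrib, neg_zero, sum_ite_irrel'] at hg
      linarith [hg]
    have hK : ∀ (a b : Fin d) (l m : Fin n) (i j : Fin n) (v : Fin n → ℝ),
        (Cm a l b m i j v + pdn l (pdn m (Am a b j i)) v - pdn l (Bm a b m j i) v
          + Cm a l b m j i v) +
        (Cm b m a l i j v + pdn m (pdn l (Am b a j i)) v - pdn m (Bm b a l j i) v
          + Cm b m a l j i v) = 0 := by
      intro a b l m i j v
      have hw1 := H i j 0 v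
        (fun a' l' => if a' = a then (if l' = l then (1:ℝ) else 0) else 0) 0 (fun _ _ _ => rfl)
      have hw2 := H i j 0 v
        (fun a' l' => if a' = b then (if l' = m then (1:ℝ) else 0) else 0) 0 (fun _ _ _ => rfl)
      have hw12 := H i j 0 v
        (fun a' l' => (if a' = a then (if l' = l then (1:ℝ) else 0) else 0) +
          (if a' = b then (if l' = m then (1:ℝ) else 0) else 0)) 0 (fun _ _ _ => rfl)
      simp only [Pi.zero_apply, mul_zero, zero_mul, Finset.sum_const_zero, add_zero, zero_add,
        mul_ite, ite_mul, mul_one, one_mul, mul_neg, neg_mul, neg_neg, mul_add, add_mul,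
        Finset.sum_add_distrib, Finset.sum_ite_eq', Finset.mem_univ, if_true, sub_zero, zero_sub,
        Finset.sum_neg_distrib, neg_zero, sum_ite_irrel'] at hw1 hw2 hw12
      linarith [hw1, hw2, hw12]
    refine ⟨c1, fun a b i j l v => ⟨c2 a b i j l v, c2' a b i j l v⟩, ?_, ?_⟩
    · intro a b i j l v
      have q1 := c2' a b i j l v
      have g := hG a b l i j v
      have p1 := c2 a b j i l v
      have p2 := c2 b a j i l v
      have d1 := congrFun (hDsym b a l i j) v
      have d2 := congrFun (hDsym b a l j i) v
      constructor
      · linarith [q1]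
      · linarith [g, p1, p2, d1, d2, q1]
    · intro a b i j l m v
      have hdd1 : pdn l (pdn m (Am a b j i)) v
          = (1/2) * (pdn l (Bm a b m j i) v - pdn l (Bm a b m i j) v) := by
        have e : pdn m (Am a b j i) = fun v => (1/2) * (Bm a b m j i v - Bm a b m i j v) :=
          funext fun v => c2 a b j i m v
        rw [e, pdn_comb l _ _ (hBdiff a b m j i) (hBdiff a b m i j) v]
      have hdd2 : pdn m (pdn l (Am b a j i)) v
          = (1/2) * (pdn m (Bm b a l j i) v - pdn m (Bm b a l i j) v) := by
        have e : pdn l (Am b a j i) = fun v => (1/2) * (Bm b a l j i v - Bm b a l i j v) :=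
          funext fun v => c2 b a j i l v
        rw [e, pdn_comb m _ _ (hBdiff b a l j i) (hBdiff b a l i j) v]
      have hcl : pdn l (pdn m (Am a b j i)) v = pdn m (pdn l (Am b a j i)) v := by
        rw [hAsym b a j i]
        exact pdn_clairaut l m (Am a b j i) (hAs a b j i) v
      have hE1 : (1/2) * (pdn l (Bm a b m j i) v - pdn l (Bm a b m i j) v)
          = (1/2) * (pdn m (Bm b a l j i) v - pdn m (Bm b a l i j) v) := by
        rw [← hdd1, ← hdd2, hcl]
      have k := hK a b l m i j v
      have s1 := congrFun (hCsym a l b m i j) v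
      have s2 := congrFun (hCsym a l b m j i) v
      constructor
      · linarith [hE1]
      · linarith [k, hdd1, hdd2, hcl, hE1, s1, s2]
  · rintro ⟨h1, h2, h3, h4⟩
    intro i j lam v w z hz
    simp only [Ebr, Ehat]
    have e1 : ∀ (a b : Fin d) (l m : Fin n) (v : Fin n → ℝ),
        pdn l (pdn m (Am a b j i)) v
          = (1/2) * (pdn l (Bm a b m j i) v - pdn l (Bm a b m i j) v) := by
      intro a b l m v
      have : pdn m (Am a b j i) = fun v => (1/2) * (Bm a b m j i v - Bm a b m i j v) :=
        funext fun v => (h2 a b j i m v).1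
      rw [this, pdn_comb l _ _ (hBdiff a b m j i) (hBdiff a b m i j) v]
    have e2 : ∀ (a b : Fin d) (l m : Fin n) (v : Fin n → ℝ),
        pdn m (pdn l (Am a b j i)) v
          = (1/2) * (pdn m (Bm b a l j i) v - pdn m (Bm b a l i j) v) := by
      intro a b l m v
      have : pdn l (Am a b j i) = fun v => (1/2) * (Bm b a l j i v - Bm b a l i j v) := by
        funext v
        rw [hAsym a b j i]
        exact (h2 b a j i l v).1
      rw [this, pdn_comb m _ _ (hBdiff b a l j i) (hBdiff b a l i j) v]
    have G1 : (∑ a, ∑ b, Am a b i j v * lam a * lam b) +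
        (∑ a, ∑ b, Am a b j i v * lam a * lam b) = 0 := by
      rw [← Finset.sum_add_distrib]
      refine Finset.sum_eq_zero fun a _ => ?_
      rw [← Finset.sum_add_distrib]
      refine Finset.sum_eq_zero fun b _ => ?_
      rw [h1 a b i j v]; ring
    have G2 : (∑ a, ∑ b, ∑ l, Bm a b l i j v * lam a * w b l) +
        (2 * ∑ a, ∑ b, ∑ l, lam a * pdn l (Am a b j i) v * w b l) -
        (∑ a, ∑ b, ∑ l, Bm a b l j i v * lam a * w b l) = 0 := by
      rw [Finset.mul_sum, ← Finset.sum_add_distrib, ← Finset.sum_sub_distrib]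
      refine Finset.sum_eq_zero fun a _ => ?_
      rw [Finset.mul_sum, ← Finset.sum_add_distrib, ← Finset.sum_sub_distrib]
      refine Finset.sum_eq_zero fun b _ => ?_
      rw [Finset.mul_sum, ← Finset.sum_add_distrib, ← Finset.sum_sub_distrib]
      refine Finset.sum_eq_zero fun l _ => ?_
      have := (h2 a b j i l v).1
      linear_combination (lam a * w b l) * this * 2
    have G4 : (∑ a, ∑ b, ∑ l, Dm a b l i j v * z a b l) +
        (∑ a, ∑ b, ∑ l, pdn l (Am a b j i) v * z a b l) -
        (∑ a, ∑ b, ∑ l, Bm a b l j i v * z a b l) +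
        (∑ a, ∑ b, ∑ l, Dm a b l j i v * z a b l) = 0 := by
      have comb : (∑ a, ∑ b, ∑ l, Dm a b l i j v * z a b l) +
        (∑ a, ∑ b, ∑ l, pdn l (Am a b j i) v * z a b l) -
        (∑ a, ∑ b, ∑ l, Bm a b l j i v * z a b l) +
        (∑ a, ∑ b, ∑ l, Dm a b l j i v * z a b l) =
        ∑ a, ∑ b, ∑ l, ((Dm a b l i j v + pdn l (Am a b j i) v - Bm a b l j i v
          + Dm a b l j i v) * z a b l) := by
        simp only [add_mul, sub_mul, Finset.sum_add_distrib, Finset.sum_sub_distrib]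

      rw [comb]
      have hswap := sum3_swap (fun a b l => (Dm a b l i j v + pdn l (Am a b j i) v
        - Bm a b l j i v + Dm a b l j i v) * z a b l)
      have hsum : (∑ a, ∑ b, ∑ l, ((Dm a b l i j v + pdn l (Am a b j i) v - Bm a b l j i v
          + Dm a b l j i v) * z a b l)) +
          (∑ a, ∑ b, ∑ l, ((Dm b a l i j v + pdn l (Am b a j i) v - Bm b a l j i v
          + Dm b a l j i v) * z b a l)) = 0 := by
        simp only [← Finset.sum_add_distrib]
        refine Finset.sum_eq_zero fun a _ => Finset.sum_eq_zero fun b _ =>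
          Finset.sum_eq_zero fun l _ => ?_
        rw [hz b a l, hDsym b a l i j, hDsym b a l j i, hAsym b a j i,
          (h2 a b j i l v).1]
        linear_combination (-(z a b l)) * ((h3 a b i j l v).1.trans (h3 a b i j l v).2)
      linarith [hswap, hsum]
    have G3 : (∑ a, ∑ l, ∑ b, ∑ m, Cm a l b m i j v * w a l * w b m) +
        (∑ a, ∑ b, ∑ l, ∑ m, pdn l (pdn m (Am a b j i)) v * w a l * w b m) -
        (∑ a, ∑ b, ∑ l, ∑ m, pdn m (Bm a b l j i) v * w a m * w b l) +
        (∑ a, ∑ l, ∑ b, ∑ m, Cm a l b m j i v * w a l * w b m) = 0 := by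
      have r1 := sum4_mid_swap (fun a l b m => Cm a l b m i j v * w a l * w b m)
      have r2 := sum4_mid_swap (fun a l b m => Cm a l b m j i v * w a l * w b m)
      have r3 := sum4_inner_swap (fun a b l m => pdn l (Bm a b m j i) v * w a l * w b m)
      rw [r1, r2, ← r3]
      have comb : (∑ a, ∑ b, ∑ l, ∑ m, Cm a l b m i j v * w a l * w b m) +
        (∑ a, ∑ b, ∑ l, ∑ m, pdn l (pdn m (Am a b j i)) v * w a l * w b m) -
        (∑ a, ∑ b, ∑ l, ∑ m, pdn l (Bm a b m j i) v * w a l * w b m) +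
        (∑ a, ∑ b, ∑ l, ∑ m, Cm a l b m j i v * w a l * w b m) =
        ∑ a, ∑ b, ∑ l, ∑ m, ((Cm a l b m i j v + pdn l (pdn m (Am a b j i)) v
          - pdn l (Bm a b m j i) v + Cm a l b m j i v) * (w a l * w b m)) := by
        simp only [add_mul, sub_mul, Finset.sum_add_distrib, Finset.sum_sub_distrib, mul_assoc]

      rw [comb]
      have hswap := sum4_swap (fun a b l m => (Cm a l b m i j v + pdn l (pdn m (Am a b j i)) v
        - pdn l (Bm a b m j i) v + Cm a l b m j i v) * (w a l * w b m))
      have hsum : (∑ a, ∑ b, ∑ l, ∑ m, ((Cm a l b m i j v + pdn l (pdn m (Am a b j i)) v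
          - pdn l (Bm a b m j i) v + Cm a l b m j i v) * (w a l * w b m))) +
          (∑ a, ∑ b, ∑ l, ∑ m, ((Cm b m a l i j v + pdn m (pdn l (Am b a j i)) v
          - pdn m (Bm b a l j i) v + Cm b m a l j i v) * (w b m * w a l))) = 0 := by
        simp only [← Finset.sum_add_distrib]
        refine Finset.sum_eq_zero fun a _ => Finset.sum_eq_zero fun b _ =>
          Finset.sum_eq_zero fun l _ => Finset.sum_eq_zero fun m _ => ?_
        rw [← hCsym a l b m i j, ← hCsym a l b m j i, hAsym b a j i,
          e1 a b l m v, e2 a b l m v]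
        have h4a := h4 a b i j l m v
        linear_combination (-(w a l * w b m)/2) * (h4a.1.trans h4a.2) + (-(w a l * w b m)/2) * h4a.2
      linarith [hswap, hsum]
    linarith [G1, G2, G3, G4]
end
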